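/- Fix 1 ≤ i < j ≤ n and let T_{ij} = { x ∈ K^n_{*μ} : σ(x_i) = x_j }. If an element t ∈ H has a fixed point on T_{ij}, then t = σ_{ij} ∘ (i j) or t = id. -/
import Mathlib


/-- The permutation action of `s : Perm (Fin n)` on `Fin n → K` (permuting the factors). -/
def permAct (K : Type*) {n : ℕ} (s : Equiv.Perm (Fin n)) : Equiv.Perm (Fin n → K) :=
  Equiv.arrowCongr s (Equiv.refl K)

/-- The involution `σ_A` of `K^n` applying `σ` to the coordinates in `A`. -/
def sigmaOn {K : Type*} (σ : Equiv.Perm K) {n : ℕ} (A : Finset (Fin n)) :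
    Equiv.Perm (Fin n → K) :=
  Equiv.piCongrRight fun i => if i ∈ A then σ else Equiv.refl K

/-- The covering transformation group `G`, generated by `S_n` and all the `σ_A`. -/
def bigG {K : Type*} (σ : Equiv.Perm K) (n : ℕ) : Subgroup (Equiv.Perm (Fin n → K)) :=
  Subgroup.closure (Set.range (permAct K (n := n)) ∪ Set.range (sigmaOn σ (n := n)))

/-- The subgroup `H ≤ G`, generated by `S_n` and the `σ_{ij}` applying `σ` to exactly two
coordinates. -/
def bigH {K : Type*} (σ : Equiv.Perm K) (n : ℕ) : Subgroup (Equiv.Perm (Fin n → K)) :=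
  Subgroup.closure (Set.range (permAct K (n := n)) ∪
    {g | ∃ A : Finset (Fin n), A.card = 2 ∧ g = sigmaOn σ A})

section Aux
variable {K : Type*} (σ : Equiv.Perm K) {n : ℕ}

lemma permAct_apply (s : Equiv.Perm (Fin n)) (x : Fin n → K) (k : Fin n) :
    permAct K s x k = x (s.symm k) := rfl

lemma sigmaOn_apply (A : Finset (Fin n)) (x : Fin n → K) (k : Fin n) :
    sigmaOn σ A x k = if k ∈ A then σ (x k) else x k := by
  show (if k ∈ A then σ else Equiv.refl K) (x k) = _
  split_ifs <;> rfl

lemma permAct_one : permAct K (1 : Equiv.Perm (Fin n)) = 1 := rfl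

lemma permAct_mul (s u : Equiv.Perm (Fin n)) :
    permAct K (s * u) = permAct K s * permAct K u := rfl

lemma permAct_inv (s : Equiv.Perm (Fin n)) :
    (permAct K s)⁻¹ = permAct K s⁻¹ := rfl

lemma sigmaOn_empty : sigmaOn σ (∅ : Finset (Fin n)) = 1 := by
  ext x k
  simp [sigmaOn_apply]

lemma mem_image_equiv (s : Equiv.Perm (Fin n)) (B : Finset (Fin n)) (k : Fin n) :
    k ∈ B.image s ↔ s.symm k ∈ B := by
  simp only [Finset.mem_image]
  constructor
  · rintro ⟨a, ha, rfl⟩; simpa using ha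
  · intro h; exact ⟨s.symm k, h, by simp⟩

lemma sigmaOn_mul (hinv : ∀ x : K, σ (σ x) = x) (A B : Finset (Fin n)) :
    sigmaOn σ A * sigmaOn σ B = sigmaOn σ (symmDiff A B) := by
  ext x k
  simp only [Equiv.Perm.mul_apply, sigmaOn_apply, Finset.mem_symmDiff]
  by_cases hA : k ∈ A <;> by_cases hB : k ∈ B <;> simp [hA, hB, hinv]

lemma permAct_mul_sigmaOn (s : Equiv.Perm (Fin n)) (B : Finset (Fin n)) :
    permAct K s * sigmaOn σ B = sigmaOn σ (B.image s) * permAct K s := by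
  ext x k
  simp only [Equiv.Perm.mul_apply, sigmaOn_apply, permAct_apply, mem_image_equiv]

lemma sigmaOn_inv (hinv : ∀ x : K, σ (σ x) = x) (A : Finset (Fin n)) :
    (sigmaOn σ A)⁻¹ = sigmaOn σ A := by
  have h : sigmaOn σ A * sigmaOn σ A = 1 := by
    rw [sigmaOn_mul σ hinv, symmDiff_self]
    exact sigmaOn_empty σ
  exact inv_eq_of_mul_eq_one_right h

lemma bigH_decomp (hinv : ∀ x : K, σ (σ x) = x) :
    ∀ t ∈ bigH σ n, ∃ (A : Finset (Fin n)) (s : Equiv.Perm (Fin n)),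
      t = sigmaOn σ A * permAct K s := by
  intro t ht
  induction ht using Subgroup.closure_induction with
  | mem g hg =>
    rcases hg with ⟨s, rfl⟩ | ⟨A, _, rfl⟩
    · exact ⟨∅, s, by rw [sigmaOn_empty, one_mul]⟩
    · exact ⟨A, 1, by rw [permAct_one, mul_one]⟩
  | one => exact ⟨∅, 1, by rw [sigmaOn_empty, permAct_one, one_mul]⟩
  | mul a b _ _ iha ihb =>
    obtain ⟨A, s, rfl⟩ := iha
    obtain ⟨B, u, rfl⟩ := ihb
    refine ⟨symmDiff A (B.image s), s * u, ?_⟩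
    rw [mul_assoc, ← mul_assoc (permAct K s), permAct_mul_sigmaOn,
      mul_assoc, ← permAct_mul, ← mul_assoc, sigmaOn_mul σ hinv]
  | inv a _ iha =>
    obtain ⟨A, s, rfl⟩ := iha
    refine ⟨A.image (⇑s⁻¹), s⁻¹, ?_⟩
    rw [mul_inv_rev, sigmaOn_inv σ hinv, permAct_inv, permAct_mul_sigmaOn]

end Aux

/-- if `t ∈ H` has a fixed point on the locus
`T_{ij} = { x ∈ K^n_{*μ} : σ (x i) = x j }` (where, among the points `x_s, σ(x_s)`, the only
coincidence is `σ(x_i) = x_j`), then `t = σ_{ij} ∘ (i j)` or `t = id`. -/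
theorem stmt4 {K : Type*} (σ : Equiv.Perm K)
    (hinv : ∀ x : K, σ (σ x) = x) (hfree : ∀ x : K, σ x ≠ x)
    (n : ℕ) (hn : 2 ≤ n) (i j : Fin n) (hij : i < j) :
    ∀ t ∈ bigH σ n,
      (∃ x : Fin n → K,
        (σ (x i) = x j ∧
          ∀ s t' : Fin n, s ≠ t' → (x s = x t' ∨ x s = σ (x t')) →
            (s = i ∧ t' = j) ∨ (s = j ∧ t' = i)) ∧
        t x = x) →
      t = sigmaOn σ {i, j} * permAct K (Equiv.swap i j) ∨ t = 1 := by
  intro t ht hex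
  obtain ⟨x, ⟨hxij, hx⟩, hfixed⟩ := hex
  obtain ⟨A, s, rfl⟩ := bigH_decomp σ hinv t ht
  have hfix : ∀ k, (if k ∈ A then σ (x (s.symm k)) else x (s.symm k)) = x k := by
    intro k
    have h := congrFun hfixed k
    simpa [Equiv.Perm.mul_apply, sigmaOn_apply, permAct_apply, apply_ite σ] using h
  -- x is injective
  have hinj : Function.Injective x := by
    intro a b hab
    by_contra hne
    rcases hx a b hne (Or.inl hab) with ⟨ha, hb⟩ | ⟨ha, hb⟩
    · rw [ha, hb] at hab
      exact hfree (x i) (hxij.trans hab.symm)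
    · rw [ha, hb] at hab
      exact hfree (x j) ((congrArg σ hab).trans hxij)
  have claim1 : ∀ k ∉ A, s.symm k = k := by
    intro k hk
    have h := hfix k
    rw [if_neg hk] at h
    exact hinj h
  have claim2 : ∀ k ∈ A, (k = i ∧ s.symm k = j) ∨ (k = j ∧ s.symm k = i) := by
    intro k hk
    have h := hfix k
    rw [if_pos hk] at h
    have hne : k ≠ s.symm k := by
      intro he
      have h' := h
      rw [← he] at h'
      exact hfree (x k) h'
    exact hx k (s.symm k) hne (Or.inr h.symm)
  by_cases hiA : i ∈ A
  · by_cases hjA : j ∈ A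
    · left
      have hsi : s.symm i = j := by
        rcases claim2 i hiA with ⟨_, h⟩ | ⟨h1, _⟩
        · exact h
        · exact absurd h1 hij.ne
      have hsj : s.symm j = i := by
        rcases claim2 j hjA with ⟨h1, _⟩ | ⟨_, h⟩
        · exact absurd h1 hij.ne'
        · exact h
      have hA : A = {i, j} := by
        ext k
        simp only [Finset.mem_insert, Finset.mem_singleton]
        constructor
        · intro hk
          rcases claim2 k hk with ⟨h, _⟩ | ⟨h, _⟩
          · exact Or.inl h
          · exact Or.inr h
        · rintro (rfl | rfl) <;> assumption
      have hs : s = Equiv.swap i j := by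
        have hsymm : s.symm = Equiv.swap i j := by
          ext k
          rcases eq_or_ne k i with rfl | hki
          · rw [hsi, Equiv.swap_apply_left]
          rcases eq_or_ne k j with rfl | hkj
          · rw [hsj, Equiv.swap_apply_right]
          · have hkA : k ∉ A := by rw [hA]; simp [hki, hkj]
            rw [claim1 k hkA, Equiv.swap_apply_of_ne_of_ne hki hkj]
        calc s = s.symm.symm := (Equiv.symm_symm s).symm
          _ = (Equiv.swap i j).symm := by rw [hsymm]
          _ = Equiv.swap i j := Equiv.symm_swap i j
      rw [hA, hs]
    · exfalso
      have hsi : s.symm i = j := by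
        rcases claim2 i hiA with ⟨_, h⟩ | ⟨h1, _⟩
        · exact h
        · exact absurd h1 hij.ne
      have hsj : s.symm j = j := claim1 j hjA
      exact hij.ne (s.symm.injective (hsi.trans hsj.symm))
  · by_cases hjA : j ∈ A
    · exfalso
      have hsj : s.symm j = i := by
        rcases claim2 j hjA with ⟨h1, _⟩ | ⟨_, h⟩
        · exact absurd h1 hij.ne'
        · exact h
      have hsi : s.symm i = i := claim1 i hiA
      exact hij.ne' (s.symm.injective (hsj.trans hsi.symm))
    · right
      have hA : A = ∅ := by
        apply Finset.eq_empty_of_forall_notMem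
        intro k hk
        rcases claim2 k hk with ⟨rfl, _⟩ | ⟨rfl, _⟩ <;> contradiction
      have hs : s = 1 := by
        have hsymm : s.symm = 1 := by
          refine Equiv.ext fun k => ?_
          exact claim1 k (by rw [hA]; exact Finset.notMem_empty k)
        calc s = s.symm.symm := (Equiv.symm_symm s).symm
          _ = (1 : Equiv.Perm (Fin n)).symm := by rw [hsymm]
          _ = 1 := rfl
      rw [hA, hs, sigmaOn_empty, permAct_one, one_mul]
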